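/- arXiv:math/0504031 — 4 statements merged into one kernel-verified Lean document; each statement's English description precedes it below -/
import Mathlib

section
/- Let E be a real Hilbert space and let S be the automorphism of E × E defined by S(x₁,x₂) = (x₂,x₁). Suppose ℓ₁ : E × E → ℝ ∪ {+∞} is a proper convex lower semicontinuous (+I)-antiselfdual Lagrangian (i.e., ℓ₁*(p,x) = ℓ₁(−x,−p) for all (x,p) ∈ E × E) and ℓ₂ : E × E → ℝ ∪ {+∞} is a proper convex lower semicontinuous (−I)-antiselfdual Lagrangian (i.e., ℓ₂*(p,x) = ℓ₂(x,p) for all (x,p) ∈ E × E). Then the Lagrangian ℓ : (E×E) × (E×E) → ℝ ∪ {+∞} defined by ℓ((a₁,a₂),(b₁,b₂)) = ℓ₁(a₁,a₂) + ℓ₂(b₁,b₂) is S-selfdual on (E×E) × (E×E), i.e., ℓ*(a, b) = ℓ(−Sa, Sb) for all a, b ∈ E × E. -/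
open MeasureTheory Set
open scoped RealInnerProductSpace Classical

noncomputable section

/-- Convexity for `EReal`-valued functions. -/
def EConvexOn {E : Type*} [AddCommGroup E] [Module ℝ E] (F : E → EReal) : Prop :=
  ∀ x y : E, ∀ a b : ℝ, 0 ≤ a → 0 ≤ b → a + b = 1 →
    F (a • x + b • y) ≤ (a : EReal) * F x + (b : EReal) * F y

/-- A function into `ℝ ∪ {+∞}` is proper: never `-∞` and not identically `+∞`. -/
def EProper {E : Type*} (F : E → EReal) : Prop :=
  (∃ x, F x ≠ ⊤) ∧ ∀ x, F x ≠ ⊥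

/-- Integral of an `ℝ ∪ {+∞}`-valued function: the Bochner integral of its real part when the
function is a.e. finite with integrable real part, and `+∞` otherwise. -/
noncomputable def eIntegral {α : Type*} [MeasurableSpace α] (μ : Measure α) (f : α → EReal) :
    EReal :=
  if Integrable (fun a => (f a).toReal) μ ∧ (∀ᵐ a ∂μ, f a = ((f a).toReal : EReal)) then
    ((∫ a, (f a).toReal ∂μ : ℝ) : EReal)
  else ⊤

variable {H : Type*} [NormedAddCommGroup H] [InnerProductSpace ℝ H]

/-- Fenchel conjugate of a function on `H × H`. -/
noncomputable def eConj2 (F : H × H → EReal) (q : H × H) : EReal :=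
  ⨆ z : H × H, ((⟪z.1, q.1⟫ + ⟪z.2, q.2⟫ : ℝ) : EReal) - F z

/-- Fenchel conjugate of a function on `H`. -/
noncomputable def eConj (f : H → EReal) (p : H) : EReal :=
  ⨆ x : H, ((⟪x, p⟫ : ℝ) : EReal) - f x

/-- `p` is a subgradient of `f` at `x`. -/
def ESubdiff (f : H → EReal) (x p : H) : Prop :=
  ∀ y, f x + ((⟪p, y - x⟫ : ℝ) : EReal) ≤ f y

/-- `q` belongs to the (joint) subdifferential of `F` at `z`. -/
def ESubdiff2 (F : H × H → EReal) (z q : H × H) : Prop :=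
  ∀ w : H × H, F z + ((⟪q.1, w.1 - z.1⟫ + ⟪q.2, w.2 - z.2⟫ : ℝ) : EReal) ≤ F w

/-- Absolutely continuous arcs `x : [0,T] → H` whose derivative `x'` lies in `L^α([0,T];H)`. -/
def IsArc (T α : ℝ) (x x' : ℝ → H) : Prop :=
  MemLp x' (ENNReal.ofReal α) (volume.restrict (Icc 0 T)) ∧
  ∀ t ∈ Icc (0:ℝ) T, x t = x 0 + ∫ s in (0:ℝ)..t, x' s

/-- Fenchel conjugate of a function on `(H × H) × (H × H)`. -/
noncomputable def eConj4 (F : (H × H) × (H × H) → EReal) (q : (H × H) × (H × H)) : EReal :=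
  ⨆ z : (H × H) × (H × H),
    ((⟪z.1.1, q.1.1⟫ + ⟪z.1.2, q.1.2⟫ + ⟪z.2.1, q.2.1⟫ + ⟪z.2.2, q.2.2⟫ : ℝ) : EReal) - F z

theorem EReal.iSup_prod_add {A B : Type*} (φ : A → EReal) (ψ : B → EReal) :
    (⨆ z : A × B, φ z.1 + ψ z.2) = (⨆ a, φ a) + ⨆ b, ψ b := by
  refine le_antisymm (iSup_le fun z => add_le_add (le_iSup φ z.1) (le_iSup ψ z.2)) ?_
  refine EReal.add_le_of_forall_lt fun s hs t ht => ?_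
  obtain ⟨a, ha⟩ := lt_iSup_iff.1 hs
  obtain ⟨b, hb⟩ := lt_iSup_iff.1 ht
  exact (EReal.add_lt_add ha hb).le.trans (le_iSup (fun z : A × B => φ z.1 + ψ z.2) (a, b))

theorem eConj4_add_of_ne_bot {F G : H × H → EReal} (hF : ∀ z, F z ≠ ⊥) (hG : ∀ z, G z ≠ ⊥)
    (a b : H × H) :
    eConj4 (fun z : (H × H) × (H × H) => F z.1 + G z.2) (a, b) = eConj2 F a + eConj2 G b := by
  rw [eConj2, eConj2, ← EReal.iSup_prod_add]
  refine iSup_congr fun z => ?_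
  rw [add_assoc, EReal.coe_add, EReal.add_sub_add_comm (.inl (hF z.1)) (.inr (hG z.2))]

theorem statement4_general (ℓ₁ ℓ₂ : H × H → EReal)
    (hp₁ : EProper ℓ₁)
    (hp₂ : EProper ℓ₂)
    (hasd₁ : ∀ x p : H, eConj2 ℓ₁ (p, x) = ℓ₁ (-x, -p))
    (hasd₂ : ∀ x p : H, eConj2 ℓ₂ (p, x) = ℓ₂ (x, p)) :
    ∀ a b : H × H,
      eConj4 (fun z : (H × H) × (H × H) => ℓ₁ z.1 + ℓ₂ z.2) (a, b) =
        ℓ₁ (-a.2, -a.1) + ℓ₂ (b.2, b.1) := by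
  intro a b
  rw [eConj4_add_of_ne_bot hp₁.2 hp₂.2, ← hasd₁, ← hasd₂]

/-- Lemma 2.3, first part: the sum of a `(+I)`-antiselfdual Lagrangian and a
`(−I)`-antiselfdual Lagrangian is an `S`-selfdual Lagrangian for `S(x₁,x₂) = (x₂,x₁)`. -/
theorem statement4 (ℓ₁ ℓ₂ : H × H → EReal)
    (hp₁ : EProper ℓ₁) (hc₁ : EConvexOn ℓ₁) (hl₁ : LowerSemicontinuous ℓ₁)
    (hp₂ : EProper ℓ₂) (hc₂ : EConvexOn ℓ₂) (hl₂ : LowerSemicontinuous ℓ₂)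
    (hasd₁ : ∀ x p : H, eConj2 ℓ₁ (p, x) = ℓ₁ (-x, -p))
    (hasd₂ : ∀ x p : H, eConj2 ℓ₂ (p, x) = ℓ₂ (x, p)) :
    ∀ a b : H × H,
      eConj4 (fun z : (H × H) × (H × H) => ℓ₁ z.1 + ℓ₂ z.2) (a, b) =
        ℓ₁ (-a.2, -a.1) + ℓ₂ (b.2, b.1) :=
  statement4_general ℓ₁ ℓ₂ hp₁ hp₂ hasd₁ hasd₂
end
end

section
/- Let E be a real Hilbert space, let ψ₁, ψ₂ : E → ℝ ∪ {+∞} be proper convex lower semicontinuous functions, and let A₁, A₂ : E → E be bounded skew-adjoint operators (Aᵢ* = −Aᵢ). Let S be the automorphism of E × E given by S(x₁,x₂) = (x₂,x₁). Then the Lagrangian ℓ : (E×E) × (E×E) → ℝ ∪ {+∞} defined by ℓ((a₁,a₂),(b₁,b₂)) = ψ₁(a₁) + ψ₁*(−A₁a₁ − a₂) + ψ₂(b₁) + ψ₂*(−A₂b₁ + b₂) is S-selfdual, i.e., ℓ*(a,b) = ℓ(−Sa, Sb) for all a, b ∈ E × E. -/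
open MeasureTheory Set
open scoped RealInnerProductSpace Classical

noncomputable section

variable {H : Type*} [NormedAddCommGroup H] [InnerProductSpace ℝ H]

/-! `ℓ(a, b) = Φ(a) + X(b)` with `Φ(x, p) = ψ₁ x + ψ₁*(-A₁x - p)` and
`X(x, p) = ψ₂ x + ψ₂*(-A₂x + p)`, so `ℓ*(a, b) = Φ*(a) + X*(b)`. In `Φ*` the shear
`q = A₁x + p` decouples the variables, because skew-adjointness gives
`⟪x, u₁⟫ + ⟪p, u₂⟫ = ⟪x, u₁ + A₁u₂⟫ + ⟪q, -u₂⟫`; hence `Φ*(u) = ψ₁*(u₁ + A₁u₂) + ψ₁**(-u₂)`,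
and likewise `X*(u) = ψ₂*(u₁ - A₂u₂) + ψ₂**(u₂)`. The Fenchel–Moreau theorem `ψ** = ψ`, proved
by separating a point below the graph from the closed convex epigraph of `ψ` in `H × ℝ`,
identifies the result with `ℓ(-Sa, Sb)`. -/

namespace EReal

lemma coe_sub_le_comm {r : ℝ} {u v : EReal} : (r : EReal) - u ≤ v ↔ (r : EReal) - v ≤ u := by
  induction u <;> induction v <;> simp [← EReal.coe_sub, add_comm]

lemma iSup_prod_add_s5 {α β : Type*} (f : α → EReal) (g : β → EReal) :
    ⨆ z : α × β, f z.1 + g z.2 = (⨆ a, f a) + ⨆ b, g b := by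
  refine le_antisymm (iSup_le fun z => add_le_add (le_iSup f z.1) (le_iSup g z.2)) ?_
  refine add_le_of_forall_lt fun a' ha b' hb => ?_
  obtain ⟨i, hi⟩ := lt_iSup_iff.1 ha
  obtain ⟨j, hj⟩ := lt_iSup_iff.1 hb
  exact (add_le_add hi.le hj.le).trans (le_iSup (fun z : α × β => f z.1 + g z.2) (i, j))

lemma iSup_coe_add_sub_add {α β : Type*} (r : α → ℝ) (s : β → ℝ) {f : α → EReal}
    {g : β → EReal} (hf : ∀ a, f a ≠ ⊥) (hg : ∀ b, g b ≠ ⊥) :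
    ⨆ z : α × β, ((r z.1 + s z.2 : ℝ) : EReal) - (f z.1 + g z.2) =
      (⨆ a, (r a : EReal) - f a) + ⨆ b, (s b : EReal) - g b := by
  simp_rw [EReal.coe_add, EReal.add_sub_add_comm (.inl (hf _)) (.inr (hg _))]
  exact iSup_prod_add_s5 (fun a => (r a : EReal) - f a) (fun b => (s b : EReal) - g b)

end EReal

section Epigraph

variable {E : Type*} {ψ : E → EReal}

lemma isClosed_realEpigraph [TopologicalSpace E] (hl : LowerSemicontinuous ψ) :
    IsClosed {z : E × ℝ | ψ z.1 ≤ z.2} :=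
  hl.isClosed_epigraph.preimage <|
    continuous_fst.prodMk (continuous_coe_real_ereal.comp continuous_snd)

lemma convex_realEpigraph [AddCommGroup E] [Module ℝ E] (hc : EConvexOn ψ) :
    Convex ℝ {z : E × ℝ | ψ z.1 ≤ z.2} := by
  rintro ⟨y₁, t₁⟩ h₁ ⟨y₂, t₂⟩ h₂ a b ha hb hab
  calc ψ (a • y₁ + b • y₂) ≤ (a : EReal) * ψ y₁ + (b : EReal) * ψ y₂ := hc _ _ a b ha hb hab
    _ ≤ (a : EReal) * t₁ + (b : EReal) * t₂ := by gcongr <;> assumption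
    _ = ((a * t₁ + b * t₂ : ℝ) : EReal) := by norm_cast

end Epigraph

section Conjugate

variable {ψ : H → EReal}

lemma eConj_ne_bot (h : ∃ x, ψ x ≠ ⊤) (p : H) : eConj ψ p ≠ ⊥ := by
  obtain ⟨x, hx⟩ := h
  refine ne_bot_of_le_ne_bot ?_ (le_iSup (fun y => ((⟪y, p⟫ : ℝ) : EReal) - ψ y) x)
  generalize ψ x = v at hx ⊢
  induction v <;> simp_all [← EReal.coe_sub]

lemma eConj_le_coe_iff {p : H} {β : ℝ} :
    eConj ψ p ≤ β ↔ ∀ y (t : ℝ), ψ y ≤ t → ⟪y, p⟫ - t ≤ β := by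
  refine ⟨fun h y t hy => ?_, fun h => iSup_le fun y => ?_⟩
  · have := (EReal.sub_le_sub le_rfl hy).trans
      ((le_iSup (fun y => ((⟪y, p⟫ : ℝ) : EReal) - ψ y) y).trans h)
    exact_mod_cast this
  · have hy := h y
    generalize ψ y = v at hy ⊢
    induction v with
    | bot => linarith [hy (⟪y, p⟫ - β - 1) bot_le]
    | top => simp
    | coe t => exact_mod_cast hy t le_rfl

lemma eConj_comp_neg (f : H → EReal) (p : H) : eConj (fun q => f (-q)) p = eConj f (-p) := by
  rw [eConj, ← (Equiv.neg H).iSup_comp]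
  simp [eConj, inner_neg_left, inner_neg_right]

lemma eConj_eConj_le (ψ : H → EReal) (x : H) : eConj (eConj ψ) x ≤ ψ x :=
  iSup_le fun p => EReal.coe_sub_le_comm.1 <| by
    rw [real_inner_comm]; exact le_iSup (fun y => ((⟪y, p⟫ : ℝ) : EReal) - ψ y) x

lemma coe_sub_le_eConj_eConj {p : H} {β : ℝ} (h : eConj ψ p ≤ β) (x : H) :
    ((⟪x, p⟫ - β : ℝ) : EReal) ≤ eConj (eConj ψ) x :=
  calc ((⟪x, p⟫ - β : ℝ) : EReal) = (⟪p, x⟫ : ℝ) - (β : EReal) := by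
        rw [EReal.coe_sub, real_inner_comm]
    _ ≤ (⟪p, x⟫ : ℝ) - eConj ψ p := EReal.sub_le_sub le_rfl h
    _ ≤ eConj (eConj ψ) x := le_iSup (fun q => ((⟪q, x⟫ : ℝ) : EReal) - eConj ψ q) p

end Conjugate

section FenchelMoreau

variable {ψ : H → EReal}

lemma exists_inner_add_mul_eq [CompleteSpace H] (f : (H × ℝ) →L[ℝ] ℝ) :
    ∃ p : H, ∀ y t, f (y, t) = ⟪y, p⟫ + t * f (0, 1) := by
  refine ⟨(InnerProductSpace.toDual ℝ H).symm (f.comp (ContinuousLinearMap.inl ℝ H ℝ)),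
    fun y t => ?_⟩
  rw [real_inner_comm, InnerProductSpace.toDual_symm_apply, ← smul_eq_mul, ← map_smul,
    ContinuousLinearMap.comp_apply, ContinuousLinearMap.inl_apply, ← map_add]
  simp

lemma exists_separation_of_lt [CompleteSpace H] (hc : EConvexOn ψ) (hl : LowerSemicontinuous ψ)
    {x : H} {c : ℝ} (hx : (c : EReal) < ψ x) :
    ∃ (p₀ : H) (s u : ℝ), ⟪x, p₀⟫ + c * s < u ∧ ∀ y (t : ℝ), ψ y ≤ t → u < ⟪y, p₀⟫ + t * s := by
  obtain ⟨f, u, hfx, hf⟩ := geometric_hahn_banach_point_closed (convex_realEpigraph hc)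
    (isClosed_realEpigraph hl) (x := (x, c)) (by simpa using hx)
  obtain ⟨p₀, hp₀⟩ := exists_inner_add_mul_eq f
  exact ⟨p₀, f (0, 1), u, hp₀ x c ▸ hfx, fun y t hy => hp₀ y t ▸ hf (y, t) hy⟩

lemma separation_slope_nonneg {p₀ y₀ : H} {s u t₀ : ℝ} (h₀ : ψ y₀ ≤ t₀)
    (h : ∀ y (t : ℝ), ψ y ≤ t → u < ⟪y, p₀⟫ + t * s) : 0 ≤ s := by
  by_contra! hs
  set t := max t₀ ((u - ⟪y₀, p₀⟫) / s)
  have h₁ := h y₀ t (h₀.trans (by exact_mod_cast le_max_left _ _))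
  have h₂ : t * s ≤ (u - ⟪y₀, p₀⟫) / s * s := mul_le_mul_of_nonpos_right (le_max_right _ _) hs.le
  rw [div_mul_cancel₀ _ hs.ne] at h₂
  linarith

lemma eConj_le_of_separation {p₀ : H} {s u : ℝ} (hs : 0 < s)
    (h : ∀ y (t : ℝ), ψ y ≤ t → u < ⟪y, p₀⟫ + t * s) :
    eConj ψ (-s⁻¹ • p₀) ≤ ((-(u / s) : ℝ) : EReal) := by
  refine eConj_le_coe_iff.2 fun y t hy => ?_
  have : u / s ≤ ⟪y, p₀⟫ / s + t := by
    rw [div_add' _ _ _ hs.ne', div_le_div_iff_of_pos_right hs]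
    exact (h y t hy).le
  rw [real_inner_smul_right, neg_mul, ← div_eq_inv_mul]
  linarith

lemma eConj_sub_smul_le {q p₀ : H} {M u lam : ℝ} (hq : eConj ψ q ≤ M) (hlam : 0 ≤ lam)
    (h : ∀ y (t : ℝ), ψ y ≤ t → u < ⟪y, p₀⟫) :
    eConj ψ (q - lam • p₀) ≤ ((M - lam * u : ℝ) : EReal) := by
  refine eConj_le_coe_iff.2 fun y t hy => ?_
  have h₁ := eConj_le_coe_iff.1 hq y t hy
  have h₂ := mul_le_mul_of_nonneg_left (h y t hy).le hlam
  rw [inner_sub_right, real_inner_smul_right]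
  linarith

variable [CompleteSpace H]

lemma exists_eConj_le (hp : EProper ψ) (hc : EConvexOn ψ) (hl : LowerSemicontinuous ψ) :
    ∃ (q : H) (M : ℝ), eConj ψ q ≤ M := by
  obtain ⟨⟨x₀, htop⟩, hbot⟩ := hp
  obtain ⟨t₀, ht₀⟩ : ∃ t : ℝ, ψ x₀ = t := ⟨_, (EReal.coe_toReal htop (hbot x₀)).symm⟩
  obtain ⟨p₀, s, u, hsep, h⟩ :=
    exists_separation_of_lt hc hl (c := t₀ - 1) (by rw [ht₀]; exact_mod_cast sub_one_lt t₀)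
  have hs : 0 < s := by linarith [h x₀ t₀ ht₀.le]
  exact ⟨_, _, eConj_le_of_separation hs h⟩

lemma exists_eConj_le_of_lt (hp : EProper ψ) (hc : EConvexOn ψ) (hl : LowerSemicontinuous ψ)
    {x : H} {c : ℝ} (hx : (c : EReal) < ψ x) :
    ∃ (p : H) (β : ℝ), eConj ψ p ≤ β ∧ c < ⟪x, p⟫ - β := by
  obtain ⟨p₀, s, u, hsep, h⟩ := exists_separation_of_lt hc hl hx
  obtain ⟨x₀, hx₀⟩ := hp.1
  rcases (separation_slope_nonneg (EReal.le_coe_toReal hx₀) h).lt_or_eq with hs | rfl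
  · refine ⟨_, _, eConj_le_of_separation hs h, ?_⟩
    rw [real_inner_smul_right, lt_sub_iff_add_lt, ← sub_pos]
    have hgap : -s⁻¹ * ⟪x, p₀⟫ - (c + -(u / s)) = (u - (⟪x, p₀⟫ + c * s)) / s := by
      field_simp; ring
    rw [hgap]; exact div_pos (by linarith) hs
  · -- A vertical separating hyperplane is tilted by a large multiple into a finite minorant.
    obtain ⟨q, M, hq⟩ := exists_eConj_le hp hc hl
    simp only [mul_zero, add_zero] at hsep h
    have hδ : 0 < u - ⟪x, p₀⟫ := sub_pos.2 hsep
    set lam := (|c - ⟪x, q⟫ + M| + 1) / (u - ⟪x, p₀⟫)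
    have hlam : lam * (u - ⟪x, p₀⟫) = |c - ⟪x, q⟫ + M| + 1 := div_mul_cancel₀ _ hδ.ne'
    refine ⟨_, _, eConj_sub_smul_le (lam := lam) hq (div_nonneg (by positivity) hδ.le) h, ?_⟩
    rw [inner_sub_right, real_inner_smul_right]
    linarith [le_abs_self (c - ⟪x, q⟫ + M)]

theorem eConj_eConj (hp : EProper ψ) (hc : EConvexOn ψ) (hl : LowerSemicontinuous ψ) (x : H) :
    eConj (eConj ψ) x = ψ x := by
  refine le_antisymm (eConj_eConj_le ψ x) (EReal.ge_of_forall_gt_iff_ge.1 fun c hcx => ?_)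
  obtain ⟨p, β, hpβ, hlt⟩ := exists_eConj_le_of_lt hp hc hl hcx
  exact (EReal.coe_le_coe_iff.2 hlt.le).trans (coe_sub_le_eConj_eConj hpβ x)

end FenchelMoreau

lemma eConj4_add {Φ X : H × H → EReal} (hΦ : ∀ z, Φ z ≠ ⊥) (hX : ∀ z, X z ≠ ⊥) (a b : H × H) :
    eConj4 (fun z => Φ z.1 + X z.2) (a, b) = eConj2 Φ a + eConj2 X b := by
  rw [eConj4, eConj2, eConj2, ← EReal.iSup_coe_add_sub_add
    (fun z => ⟪z.1, a.1⟫ + ⟪z.2, a.2⟫) (fun z => ⟪z.1, b.1⟫ + ⟪z.2, b.2⟫) hΦ hX]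
  simp only [add_assoc]

lemma eConj2_add_comp_shear {f g : H → EReal} (hf : ∀ x, f x ≠ ⊥) (hg : ∀ q, g q ≠ ⊥)
    {A B : H → H} (hAB : ∀ x y, ⟪A x, y⟫ = ⟪x, B y⟫) (u : H × H) :
    eConj2 (fun z => f z.1 + g (A z.1 + z.2)) u = eConj f (u.1 - B u.2) + eConj g u.2 := by
  let e : H × H ≃ H × H := (Equiv.refl H).prodShear fun x => Equiv.addLeft (-A x)
  rw [eConj2, ← e.iSup_comp]
  refine (iSup_congr fun w => ?_).trans (EReal.iSup_coe_add_sub_add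
    (fun x => ⟪x, u.1 - B u.2⟫) (fun q => ⟪q, u.2⟫) hf hg)
  have hinner : ⟪w.1, u.1⟫ + ⟪-A w.1 + w.2, u.2⟫ = ⟪w.1, u.1 - B u.2⟫ + ⟪w.2, u.2⟫ := by
    rw [inner_add_left, inner_neg_left, hAB, inner_sub_right]; ring
  simp [e, hinner]

/-- Lemma 2.3, second part: for convex l.s.c. `ψ₁, ψ₂` and bounded
skew-adjoint `A₁, A₂`, the boundary Lagrangian
`ℓ((a₁,a₂),(b₁,b₂)) = ψ₁(a₁) + ψ₁*(−A₁a₁ − a₂) + ψ₂(b₁) + ψ₂*(−A₂b₁ + b₂)` is `S`-selfdual. -/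
theorem statement5 [CompleteSpace H] (ψ₁ ψ₂ : H → EReal)
    (hp₁ : EProper ψ₁) (hc₁ : EConvexOn ψ₁) (hl₁ : LowerSemicontinuous ψ₁)
    (hp₂ : EProper ψ₂) (hc₂ : EConvexOn ψ₂) (hl₂ : LowerSemicontinuous ψ₂)
    (A₁ A₂ : H →L[ℝ] H)
    (hA₁ : ∀ x y : H, ⟪A₁ x, y⟫ = -⟪x, A₁ y⟫) (hA₂ : ∀ x y : H, ⟪A₂ x, y⟫ = -⟪x, A₂ y⟫) :
    ∀ a b : H × H,
      eConj4 (fun z : (H × H) × (H × H) =>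
          ψ₁ z.1.1 + eConj ψ₁ (-(A₁ z.1.1) - z.1.2) +
          ψ₂ z.2.1 + eConj ψ₂ (-(A₂ z.2.1) + z.2.2)) (a, b) =
        ψ₁ (-a.2) + eConj ψ₁ (-(A₁ (-a.2)) - (-a.1)) +
          ψ₂ b.2 + eConj ψ₂ (-(A₂ b.2) + b.1) := by
  intro a b
  have hbot {ψ : H → EReal} (hp : EProper ψ) (x q : H) : ψ x + eConj ψ q ≠ ⊥ :=
    EReal.add_ne_bot_iff.2 ⟨hp.2 x, eConj_ne_bot hp.1 q⟩
  set Φ : H × H → EReal := fun z => ψ₁ z.1 + (fun q => eConj ψ₁ (-q)) (A₁ z.1 + z.2)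
  set X : H × H → EReal := fun z => ψ₂ z.1 + eConj ψ₂ (-(A₂ z.1) + z.2)
  have hℓ : (fun z : (H × H) × (H × H) => ψ₁ z.1.1 + eConj ψ₁ (-(A₁ z.1.1) - z.1.2) +
      ψ₂ z.2.1 + eConj ψ₂ (-(A₂ z.2.1) + z.2.2)) = fun z => Φ z.1 + X z.2 := by
    funext z; simp only [Φ, X, neg_add', add_assoc]
  have hΦ : eConj2 Φ a = eConj ψ₁ (a.1 + A₁ a.2) + ψ₁ (-a.2) := by
    rw [eConj2_add_comp_shear hp₁.2 (fun q => eConj_ne_bot hp₁.1 (-q)) (B := fun y => -A₁ y)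
      (fun x y => by rw [inner_neg_right, hA₁]), eConj_comp_neg, eConj_eConj hp₁ hc₁ hl₁,
      sub_neg_eq_add]
  have hX : eConj2 X b = eConj ψ₂ (b.1 - A₂ b.2) + ψ₂ b.2 := by
    rw [eConj2_add_comp_shear hp₂.2 (eConj_ne_bot hp₂.1) (A := fun x => -A₂ x) (B := A₂)
      (fun x y => by rw [inner_neg_left, hA₂, neg_neg]), eConj_eConj hp₂ hc₂ hl₂]
  rw [hℓ, eConj4_add (Φ := Φ) (X := X) (fun _ => hbot hp₁ _ _) (fun _ => hbot hp₂ _ _), hΦ, hX,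
    map_neg, neg_neg, sub_neg_eq_add, neg_add_eq_sub, add_comm (A₁ a.2)]
  ac_rfl
end
end

section
/- Let H be a real Hilbert space and L : H × H → ℝ ∪ {+∞} a proper convex lower semicontinuous antiselfdual Lagrangian, i.e., L*(p,x) = L(−x,−p) for all (x,p) ∈ H × H. For λ > 0 let L_λ(x,p) = inf_z { L(z,p) + ‖x − z‖²_H/(2λ) } + (λ/2)‖p‖²_H be its λ-regularization, and let J_λ(x,p) be the minimizer of z ↦ L(z,p) + ‖x − z‖²_H/(2λ). If (x,y) ∈ H × H satisfies (−y,−x) ∈ ∂L_λ(x,y) (joint subdifferential), then necessarily (−y, −J_λ(x,y)) ∈ ∂L(J_λ(x,y), y). -/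
/-!
Bounding the infimum defining `L_λ(a, b)` by its value at an arbitrary `c`, and evaluating the one
defining `L_λ(x, y)` at its minimizer `zs`, turns the subgradient inequality for `L_λ` at `(x, y)`
into an inequality between values of `L` with explicit quadratic terms. Tested at the point
`(zs - λ y, y)` it forces `zs = x + λ y`. Tested along the segment from `(zs, y)` to `(c, b)`
and combined with the convexity of `L`, it gives the subgradient inequality for `L` at `(zs, y)`
up to an error `O(s)`, where `s` is the position on the segment; letting `s → 0` removes it.
-/

open MeasureTheory Set
open scoped RealInnerProductSpace Classical

noncomputable section

variable {H : Type*} [NormedAddCommGroup H] [InnerProductSpace ℝ H]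

/-- The `λ`-regularization `L_λ` of a Lagrangian `L` on `H × H`. -/
noncomputable def regLag (lam : ℝ) (L : H × H → EReal) : H × H → EReal :=
  fun w => (⨅ z : H, L (z, w.2) + ((‖w.1 - z‖^2 / (2*lam) : ℝ) : EReal)) +
    (((lam/2) * ‖w.2‖^2 : ℝ) : EReal)

theorem EReal.le_add_coe_sub {u v : EReal} {A B : ℝ} (h : u + A ≤ v + B) :
    u ≤ v + ((B - A : ℝ) : EReal) := by
  induction u using EReal.rec <;> induction v using EReal.rec <;>
    simp_all [← EReal.coe_add, -EReal.coe_sub]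
  linarith

open Filter Topology in
theorem EConvexOn.add_le_of_le_segment_add_sq {E : Type*} [AddCommGroup E] [Module ℝ E]
    {f : E → EReal} (hf : EConvexOn f) (hbot : ∀ x, f x ≠ ⊥) {x₀ : E} {g : E → ℝ}
    (h : ∀ x, ∃ C : ℝ, ∀ s : ℝ, 0 < s → s ≤ 1 →
      f x₀ ≤ f ((1 - s) • x₀ + s • x) + ((C * s ^ 2 - s * g x : ℝ) : EReal))
    (x : E) : f x₀ + (g x : EReal) ≤ f x := by
  obtain ⟨C, hC⟩ := h x
  rcases eq_or_ne (f x) ⊤ with hx | hx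
  · simp [hx]
  have hx₀ : f x₀ ≠ ⊤ := by
    have h₁ := hC 1 one_pos le_rfl
    simp only [sub_self, zero_smul, one_smul, zero_add] at h₁
    exact ne_top_of_le_ne_top (EReal.add_lt_top hx (EReal.coe_ne_top _)).ne h₁
  obtain ⟨r, hr⟩ : ∃ r : ℝ, f x₀ = r := ⟨_, (EReal.coe_toReal hx₀ (hbot x₀)).symm⟩
  obtain ⟨t, ht⟩ : ∃ t : ℝ, f x = t := ⟨_, (EReal.coe_toReal hx (hbot x)).symm⟩
  rw [hr, ht]
  have key : ∀ s ∈ Ioc (0 : ℝ) 1, r + g x ≤ t + C * s := by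
    rintro s ⟨hs, hs₁⟩
    have h₁ := (hC s hs hs₁).trans
      (add_le_add_left (hf x₀ x (1 - s) s (by linarith) hs.le (by ring)) _)
    rw [hr, ht] at h₁
    norm_cast at h₁
    exact le_of_mul_le_mul_left (by linear_combination h₁) hs
  have hlim : Tendsto (fun s : ℝ => t + C * s) (𝓝[>] 0) (𝓝 t) :=
    tendsto_nhdsWithin_of_tendsto_nhds <|
      (continuous_const.add (continuous_const_mul C)).tendsto' 0 t (by simp)
  exact_mod_cast ge_of_tendsto hlim (eventually_of_mem (Ioc_mem_nhdsGT one_pos) key)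

section Regularization

variable {E : Type*} [NormedAddCommGroup E] {L : E × E → EReal} {lam : ℝ}

/-- `zs = J_λ(x, y)` in the paper's notation. -/
def IsRegMinimizer (lam : ℝ) (L : E × E → EReal) (x y zs : E) : Prop :=
  ∀ z : E, L (zs, y) + ((‖x - zs‖ ^ 2 / (2 * lam) : ℝ) : EReal) ≤
    L (z, y) + ((‖x - z‖ ^ 2 / (2 * lam) : ℝ) : EReal)

theorem regLag_le (a b c : E) :
    regLag lam L (a, b) ≤
      L (c, b) + ((‖a - c‖ ^ 2 / (2 * lam) + lam / 2 * ‖b‖ ^ 2 : ℝ) : EReal) := by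
  rw [regLag, EReal.coe_add, ← add_assoc]
  exact add_le_add_left (iInf_le (fun z => L (z, b) + _) c) _

theorem IsRegMinimizer.regLag_eq {x y zs : E} (hmin : IsRegMinimizer lam L x y zs) :
    regLag lam L (x, y) =
      L (zs, y) + ((‖x - zs‖ ^ 2 / (2 * lam) + lam / 2 * ‖y‖ ^ 2 : ℝ) : EReal) := by
  rw [regLag, EReal.coe_add, ← add_assoc]
  exact congrArg (· + _) (le_antisymm (iInf_le (fun z => L (z, y) + _) zs) (le_iInf hmin))

end Regularization

section SubdiffRegLag

variable {L : H × H → EReal} {lam : ℝ} {x y zs : H}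

theorem IsRegMinimizer.le_add_of_subdiff_regLag (hmin : IsRegMinimizer lam L x y zs)
    (hsub : ESubdiff2 (regLag lam L) (x, y) (-y, -x)) (a b c : H) :
    L (zs, y) ≤ L (c, b) + ((‖a - c‖ ^ 2 / (2 * lam) + lam / 2 * ‖b‖ ^ 2
      - (‖x - zs‖ ^ 2 / (2 * lam) + lam / 2 * ‖y‖ ^ 2)
      + (⟪y, a - x⟫ + ⟪x, b - y⟫) : ℝ) : EReal) := by
  have h := (hsub (a, b)).trans (regLag_le a b c)
  rw [hmin.regLag_eq, add_assoc, ← EReal.coe_add] at h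
  convert EReal.le_add_coe_sub h using 3
  simp only [inner_neg_left]
  ring

theorem IsRegMinimizer.eq_add_smul_of_subdiff_regLag (hlam : 0 < lam)
    (hmin : IsRegMinimizer lam L x y zs) (hsub : ESubdiff2 (regLag lam L) (x, y) (-y, -x))
    (htop : L (zs, y) ≠ ⊤) (hbot : L (zs, y) ≠ ⊥) : zs = x + lam • y := by
  have h := hmin.le_add_of_subdiff_regLag hsub (zs - lam • y) y zs
  rw [← EReal.coe_toReal htop hbot, ← EReal.coe_add, EReal.coe_le_coe_iff,
    le_add_iff_nonneg_right] at h
  have e1 : zs - lam • y - zs = -(lam • y) := by abel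
  have e2 : zs - lam • y - x = (zs - x) - lam • y := by abel
  have hlam_y : ‖lam • y‖ ^ 2 = lam ^ 2 * ‖y‖ ^ 2 := by
    rw [norm_smul, Real.norm_eq_abs, mul_pow, sq_abs]
  rw [e1, e2, sub_self, inner_zero_right, norm_neg, hlam_y, norm_sub_rev x zs,
    inner_sub_right, real_inner_smul_right, real_inner_self_eq_norm_sq] at h
  have hsq : ‖(zs - x) - lam • y‖ ^ 2 ≤ 0 := by
    rw [norm_sub_sq_real, real_inner_smul_right, hlam_y, real_inner_comm]
    have := mul_nonneg (by positivity : (0:ℝ) ≤ 2 * lam) h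
    field_simp at this
    linarith
  rwa [sq_nonpos_iff, norm_eq_zero, sub_sub, sub_eq_zero] at hsq

theorem IsRegMinimizer.le_segment_of_subdiff_regLag (hmin : IsRegMinimizer lam L x y zs)
    (hsub : ESubdiff2 (regLag lam L) (x, y) (-y, -x)) (hzs : zs = x + lam • y) (c b : H) (s : ℝ) :
    L (zs, y) ≤ L ((1 - s) • (zs, y) + s • (c, b)) +
      ((lam / 2 * ‖b - y‖ ^ 2 * s ^ 2 - s * (⟪-y, c - zs⟫ + ⟪-zs, b - y⟫) : ℝ) : EReal) := by
  have h := hmin.le_add_of_subdiff_regLag hsub (x + s • (c - zs)) ((1 - s) • y + s • b)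
    ((1 - s) • zs + s • c)
  rw [Prod.smul_mk, Prod.smul_mk, Prod.mk_add_mk]
  refine h.trans_eq (congrArg _ (congrArg _ ?_))
  have e1 : x + s • (c - zs) - ((1 - s) • zs + s • c) = x - zs := by module
  have e2 : (1 - s) • y + s • b = y + s • (b - y) := by module
  have e3 : x + s • (c - zs) - x = s • (c - zs) := by abel
  have e4 : y + s • (b - y) - y = s • (b - y) := by abel
  have hx : x = zs - lam • y := by rw [hzs]; abel
  rw [e1, e2, e3, e4, norm_add_sq_real, norm_smul, Real.norm_eq_abs, mul_pow, sq_abs,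
    real_inner_smul_right, real_inner_smul_right, real_inner_smul_right, inner_neg_left,
    inner_neg_left, hx, inner_sub_left, real_inner_smul_left]
  ring

end SubdiffRegLag

theorem statement15_general (L : H × H → EReal)
    (hLp : EProper L) (hLc : EConvexOn L)
    (lam : ℝ) (hlam : 0 < lam) (x y zs : H)
    (hmin : ∀ z : H, L (zs, y) + ((‖x - zs‖^2 / (2*lam) : ℝ) : EReal) ≤
      L (z, y) + ((‖x - z‖^2 / (2*lam) : ℝ) : EReal))
    (hsub : ESubdiff2 (regLag lam L) (x, y) (-y, -x)) :
    ESubdiff2 L (zs, y) (-y, -zs) := by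
  replace hmin : IsRegMinimizer lam L x y zs := hmin
  obtain ⟨⟨c₀, b₀⟩, hw₀⟩ := hLp.1
  have htop : L (zs, y) ≠ ⊤ := ne_top_of_le_ne_top (EReal.add_lt_top hw₀ (EReal.coe_ne_top _)).ne
    (hmin.le_add_of_subdiff_regLag hsub 0 b₀ c₀)
  have hzs := hmin.eq_add_smul_of_subdiff_regLag hlam hsub htop (hLp.2 _)
  exact hLc.add_le_of_le_segment_add_sq hLp.2 (g := fun w => ⟪-y, w.1 - zs⟫ + ⟪-zs, w.2 - y⟫)
    fun w => ⟨lam / 2 * ‖w.2 - y‖ ^ 2, fun s _ _ =>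
      hmin.le_segment_of_subdiff_regLag hsub hzs w.1 w.2 s⟩

/-- Lemma 3.5 (1): if `(−y,−x) ∈ ∂L_λ(x,y)` then
`(−y, −J_λ(x,y)) ∈ ∂L(J_λ(x,y), y)`. -/
theorem statement15 (L : H × H → EReal)
    (hLp : EProper L) (hLc : EConvexOn L) (hLl : LowerSemicontinuous L)
    (hLasd : ∀ x p : H, eConj2 L (p, x) = L (-x, -p))
    (lam : ℝ) (hlam : 0 < lam) (x y zs : H)
    (hmin : ∀ z : H, L (zs, y) + ((‖x - zs‖^2 / (2*lam) : ℝ) : EReal) ≤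
      L (z, y) + ((‖x - z‖^2 / (2*lam) : ℝ) : EReal))
    (hsub : ESubdiff2 (regLag lam L) (x, y) (-y, -x)) :
    ESubdiff2 L (zs, y) (-y, -zs) :=
  statement15_general L hLp hLc lam hlam x y zs hmin hsub
end
end

section
/- Let H be a real Hilbert space, T > 0, and L : H × H → ℝ ∪ {+∞} a proper convex lower semicontinuous antiselfdual Lagrangian (L*(p,x) = L(−x,−p)) that is uniformly convex in its first variable (there is ε > 0 with x ↦ L(x,p) − (ε/2)‖x‖² convex for each p). Let x₀ ∈ Dom₁(∂L) and let p₀ ∈ H satisfy (−p₀,−x₀) ∈ ∂L(x₀,p₀). If x̂ ∈ A²_H([0,T]) satisfies ∫₀ᵀ L(x̂(t), x̂̇(t)) dt + ½‖x̂(0)‖²_H − 2⟨x̂(0), x₀⟩ + ‖x₀‖²_H + ½‖x̂(T)‖²_H = 0, then ∫₀ᵀ ‖x̂̇(t)‖²_H dt ≤ T‖p₀‖²_H. -/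
open MeasureTheory Set
open scoped RealInnerProductSpace Classical

noncomputable section

variable {H : Type*} [NormedAddCommGroup H] [InnerProductSpace ℝ H]

/-!
Antiselfduality gives the Fenchel–Young inequality `L(x, p) + ⟪x, p⟫ ≥ 0`, and the chain rule
`∫₀ᵀ ⟪x, x'⟫ = (‖x T‖² - ‖x 0‖²)/2` turns the zero of the action into
`∫₀ᵀ (L(x, x') + ⟪x, x'⟫) + ‖x 0 - x₀‖² = 0`. Hence `x 0 = x₀` and `(x, x')` runs a.e. in the zero
set of the defect, on which `⟪z₁ - w₁, z₂ - w₂⟫ ≤ 0`; the same holds against `(x₀, p₀)` since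
`(-p₀, -x₀) ∈ ∂L(x₀, p₀)`. As for monotone evolutions, shifts of the arc are then nonexpansive,
`‖x(t + h) - x t‖ ≤ ‖x h - x 0‖`, and a Bihari-type argument gives `‖x h - x₀‖ ≤ h ‖p₀‖`.
So `x` is `‖p₀‖`-Lipschitz, whence `‖x'‖ ≤ ‖p₀‖` a.e.
-/

def IsAntiselfdual (L : H × H → EReal) : Prop :=
  ∀ x p : H, eConj2 L (p, x) = L (-x, -p)

lemma le_eConj2 (F : H × H → EReal) (q z : H × H) :
    ((⟪z.1, q.1⟫ + ⟪z.2, q.2⟫ : ℝ) : EReal) - F z ≤ eConj2 F q :=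
  le_iSup (fun z : H × H => ((⟪z.1, q.1⟫ + ⟪z.2, q.2⟫ : ℝ) : EReal) - F z) z

namespace IsAntiselfdual

variable {L : H × H → EReal}

lemma eConj2_neg_swap (hL : IsAntiselfdual L) (z : H × H) : eConj2 L (-z.2, -z.1) = L z := by
  simpa using hL (-z.1) (-z.2)

/-- Fenchel–Young inequality for `L` and `L* = L ∘ (-swap)`. -/
lemma neg_inner_le (hL : IsAntiselfdual L) (z : H × H) : ((-⟪z.1, z.2⟫ : ℝ) : EReal) ≤ L z := by
  have h := le_eConj2 L (-z.2, -z.1) z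
  rw [hL.eConj2_neg_swap] at h
  induction hz : L z using EReal.rec with
  | bot => rw [hz] at h; simp at h
  | top => exact le_top
  | coe r =>
    rw [hz, ← EReal.coe_sub, EReal.coe_le_coe_iff] at h
    rw [EReal.coe_le_coe_iff]
    simp only [inner_neg_right, real_inner_comm z.1 z.2] at h
    linarith

lemma inner_sub_nonpos (hL : IsAntiselfdual L) {z w : H × H}
    (hz : L z = ((-⟪z.1, z.2⟫ : ℝ) : EReal)) (hw : L w = ((-⟪w.1, w.2⟫ : ℝ) : EReal)) :
    ⟪z.1 - w.1, z.2 - w.2⟫ ≤ 0 := by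
  have h := le_eConj2 L (-z.2, -z.1) w
  rw [hL.eConj2_neg_swap, hz, hw, ← EReal.coe_sub, EReal.coe_le_coe_iff] at h
  simp only [inner_neg_right, inner_sub_left, inner_sub_right] at h ⊢
  linarith [real_inner_comm w.2 z.1, real_inner_comm w.1 z.2]

lemma inner_sub_nonpos_of_eSubdiff2 (hL : IsAntiselfdual L) {z w : H × H}
    (hw : ESubdiff2 L w (-w.2, -w.1)) (hz : L z = ((-⟪z.1, z.2⟫ : ℝ) : EReal)) :
    ⟪z.1 - w.1, z.2 - w.2⟫ ≤ 0 := by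
  have h := (add_le_add_left (hL.neg_inner_le w) _).trans (hw z)
  rw [hz, ← EReal.coe_add, EReal.coe_le_coe_iff] at h
  simp only [inner_neg_left, inner_sub_left, inner_sub_right] at h ⊢
  linarith [real_inner_comm w.2 z.1, real_inner_comm w.1 z.2, real_inner_comm w.1 w.2]

end IsAntiselfdual

lemma eIntegral_add_coe_eq_zero {α : Type*} [MeasurableSpace α] {μ : Measure α} {f : α → EReal}
    {r : ℝ} (h : eIntegral μ f + (r : EReal) = 0) :
    Integrable (fun a => (f a).toReal) μ ∧ (∀ᵐ a ∂μ, f a = ((f a).toReal : EReal)) ∧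
      ∫ a, (f a).toReal ∂μ = -r := by
  unfold eIntegral at h
  split_ifs at h with hf
  · refine ⟨hf.1, hf.2, ?_⟩
    rw [← EReal.coe_add, ← EReal.coe_zero, EReal.coe_eq_coe_iff] at h
    linarith
  · simp at h

lemma AbsolutelyContinuousOnInterval.of_dist_le {X Y : Type*} [PseudoMetricSpace X]
    [PseudoMetricSpace Y] {f : ℝ → X} {G : ℝ → Y} {a b C : ℝ}
    (hG : AbsolutelyContinuousOnInterval G a b)
    (h : ∀ x ∈ uIcc a b, ∀ y ∈ uIcc a b, dist (f x) (f y) ≤ C * dist (G x) (G y)) :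
    AbsolutelyContinuousOnInterval f a b := by
  unfold AbsolutelyContinuousOnInterval at hG ⊢
  refine squeeze_zero' (.of_forall fun _ => Finset.sum_nonneg fun _ _ => dist_nonneg) ?_
    (by simpa using hG.const_mul C)
  rw [Filter.eventually_inf_principal]
  filter_upwards with E hE
  rw [Finset.mul_sum]
  exact Finset.sum_le_sum fun i hi => h _ (hE.1 i hi).1 _ (hE.1 i hi).2

lemma integrableOn_inner_of_continuousOn {μ : Measure ℝ} {K : Set ℝ} {F g : ℝ → H}
    (hK : IsCompact K) (hF : ContinuousOn F K) (hg : IntegrableOn g K μ) :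
    IntegrableOn (fun t => ⟪F t, g t⟫) K μ := by
  obtain ⟨C, hC⟩ := hK.exists_bound_of_continuousOn hF
  exact (innerSL ℝ).integrable_of_bilin_of_bdd_left C
    (hF.aestronglyMeasurable hK.measurableSet)
    (ae_restrict_of_forall_mem hK.measurableSet hC) hg

/-- `F` is absolutely continuous, hence so is `‖F‖²`, whose a.e. derivative is `2⟪F, g⟫`. -/
lemma integral_inner_eq_of_eq_add_integral [CompleteSpace H] {F g : ℝ → H} {a b : ℝ} (hab : a ≤ b)
    (hg : IntervalIntegrable g volume a b)
    (hF : ∀ t ∈ Icc a b, F t = F a + ∫ s in a..t, g s) :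
    ∫ t in a..b, ⟪F t, g t⟫ = (‖F b‖ ^ 2 - ‖F a‖ ^ 2) / 2 := by
  have hg_on : ∀ x ∈ Icc a b, IntervalIntegrable g volume a x := fun x hx =>
    hg.mono_set (by rw [uIcc_of_le hab, uIcc_of_le hx.1]; exact Icc_subset_Icc_right hx.2)
  have hFac : AbsolutelyContinuousOnInterval F a b := by
    refine (hg.norm.absolutelyContinuousOnInterval_intervalIntegral left_mem_uIcc).of_dist_le
      (C := 1) fun x hx y hy => ?_
    rw [uIcc_of_le hab] at hx hy
    rw [hF x hx, hF y hy, dist_add_left, one_mul, dist_eq_norm, dist_eq_norm,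
      intervalIntegral.integral_interval_sub_left (hg_on x hx) (hg_on y hy),
      intervalIntegral.integral_interval_sub_left (hg_on x hx).norm (hg_on y hy).norm,
      Real.norm_eq_abs]
    exact intervalIntegral.norm_integral_le_abs_integral_norm
  obtain ⟨B, hB⟩ := hFac.exists_bound
  have hφac : AbsolutelyContinuousOnInterval (fun t => ‖F t‖ ^ 2) a b := by
    refine hFac.of_dist_le (C := 2 * B) fun x hx y hy => ?_
    calc dist (‖F x‖ ^ 2) (‖F y‖ ^ 2) = |‖F x‖ - ‖F y‖| * (‖F x‖ + ‖F y‖) := by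
          rw [Real.dist_eq, ← abs_of_nonneg (by positivity : 0 ≤ ‖F x‖ + ‖F y‖), ← abs_mul]
          ring_nf
      _ ≤ dist (F x) (F y) * (2 * B) := by
          rw [dist_eq_norm]
          exact mul_le_mul (abs_norm_sub_norm_le _ _) (by linarith [hB x hx, hB y hy])
            (by positivity) (norm_nonneg _)
      _ = 2 * B * dist (F x) (F y) := mul_comm _ _
  have hderiv : ∀ᵐ t, t ∈ uIoc a b → deriv (fun t => ‖F t‖ ^ 2) t = 2 * ⟪F t, g t⟫ := by
    have hb : ∀ᵐ t : ℝ, t ≠ b := by simp [ae_iff, measure_singleton]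
    filter_upwards [hg.ae_hasDerivAt_integral, hb] with t ht htb hmem
    rw [uIoc_of_le hab] at hmem
    have hmem' : t ∈ Ioo a b := ⟨hmem.1, lt_of_le_of_ne hmem.2 htb⟩
    have hFt : HasDerivAt F (g t) t := by
      refine ((ht (uIcc_of_le hab ▸ Ioc_subset_Icc_self hmem) a left_mem_uIcc).const_add
        (F a)).congr_of_eventuallyEq ?_
      filter_upwards [Ioo_mem_nhds hmem'.1 hmem'.2] with s hs using hF s (Ioo_subset_Icc_self hs)
    exact hFt.norm_sq.deriv
  rw [← hφac.integral_deriv_eq_sub, intervalIntegral.integral_congr_ae hderiv,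
    intervalIntegral.integral_const_mul]
  ring

lemma le_of_sq_le_mul {M k : ℝ} (hM : 0 ≤ M) (hk : 0 ≤ k) (h : M ^ 2 ≤ k * M) : M ≤ k := by
  rcases hM.eq_or_lt with rfl | hM
  · exact hk
  · exact le_of_mul_le_mul_right (by nlinarith) hM

section Gronwall

variable {u : ℝ → ℝ} {c T : ℝ}

lemma ContinuousOn.intervalIntegrable_of_Icc_zero (hu : ContinuousOn u (Icc 0 T)) {t : ℝ}
    (ht : t ∈ Icc 0 T) : IntervalIntegrable u volume 0 t :=
  (hu.mono (by rw [uIcc_of_le ht.1]; exact Icc_subset_Icc_right ht.2)).intervalIntegrable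

lemma le_two_mul_mul_of_sq_le_integral (hc : 0 ≤ c) (hu : ContinuousOn u (Icc 0 T))
    (hu0 : ∀ t ∈ Icc 0 T, 0 ≤ u t) (h : ∀ t ∈ Icc 0 T, u t ^ 2 ≤ 2 * c * ∫ s in (0:ℝ)..t, u s)
    {t : ℝ} (ht : t ∈ Icc 0 T) : u t ≤ 2 * c * t := by
  have hsub : Icc 0 t ⊆ Icc 0 T := Icc_subset_Icc_right ht.2
  obtain ⟨s₀, hs₀, hmax⟩ := isCompact_Icc.exists_isMaxOn (nonempty_Icc.mpr ht.1) (hu.mono hsub)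
  have hint : ∫ s in (0:ℝ)..s₀, u s ≤ u s₀ * s₀ := by
    calc ∫ s in (0:ℝ)..s₀, u s ≤ ∫ _ in (0:ℝ)..s₀, u s₀ :=
          intervalIntegral.integral_mono_on hs₀.1 (hu.intervalIntegrable_of_Icc_zero (hsub hs₀))
            intervalIntegrable_const fun s hs => hmax ⟨hs.1, hs.2.trans hs₀.2⟩
      _ = u s₀ * s₀ := by simp [mul_comm]
  have hM : u s₀ ≤ 2 * c * t := by
    refine le_of_sq_le_mul (hu0 _ (hsub hs₀)) (by nlinarith [ht.1]) ?_
    calc u s₀ ^ 2 ≤ 2 * c * (u s₀ * s₀) :=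
          (h s₀ (hsub hs₀)).trans (mul_le_mul_of_nonneg_left hint (by positivity))
      _ ≤ 2 * c * t * u s₀ := by
          nlinarith [mul_le_mul_of_nonneg_left hs₀.2 (mul_nonneg hc (hu0 _ (hsub hs₀)))]
  exact (hmax ⟨ht.1, le_rfl⟩).trans hM

lemma le_sqrt_mul_mul_of_sq_le_integral {a : ℝ} (hc : 0 ≤ c) (ha : 0 ≤ a)
    (hu : ContinuousOn u (Icc 0 T)) (hu0 : ∀ t ∈ Icc 0 T, 0 ≤ u t)
    (h : ∀ t ∈ Icc 0 T, u t ^ 2 ≤ 2 * c * ∫ s in (0:ℝ)..t, u s)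
    (hua : ∀ t ∈ Icc 0 T, u t ≤ a * t) {t : ℝ} (ht : t ∈ Icc 0 T) :
    u t ≤ √(c * a) * t := by
  have hint : ∫ s in (0:ℝ)..t, u s ≤ a * t ^ 2 / 2 := by
    calc ∫ s in (0:ℝ)..t, u s ≤ ∫ s in (0:ℝ)..t, a * s :=
          intervalIntegral.integral_mono_on ht.1 (hu.intervalIntegrable_of_Icc_zero ht)
            ((continuous_const_mul a).intervalIntegrable _ _)
            fun s hs => hua s ⟨hs.1, hs.2.trans ht.2⟩
      _ = a * t ^ 2 / 2 := by rw [intervalIntegral.integral_const_mul, integral_id]; ring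
  refine (pow_le_pow_iff_left₀ (hu0 t ht) (by positivity [ht.1]) two_ne_zero).mp ?_
  rw [mul_pow, Real.sq_sqrt (mul_nonneg hc ha)]
  nlinarith [h t ht]

lemma le_mul_of_sq_le_integral (hc : 0 ≤ c) (hu : ContinuousOn u (Icc 0 T))
    (hu0 : ∀ t ∈ Icc 0 T, 0 ≤ u t) (h : ∀ t ∈ Icc 0 T, u t ^ 2 ≤ 2 * c * ∫ s in (0:ℝ)..t, u s)
    {t : ℝ} (ht : t ∈ Icc 0 T) : u t ≤ c * t := by
  set S := {a : ℝ | 0 ≤ a ∧ ∀ t ∈ Icc 0 T, u t ≤ a * t}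
  have hS : IsClosed S := by
    have : S = Ici 0 ∩ ⋂ t ∈ Icc 0 T, {a | u t ≤ a * t} := by ext; simp [S]
    rw [this]
    exact isClosed_Ici.inter (isClosed_biInter fun t _ => isClosed_le (by fun_prop) (by fun_prop))
  -- the least admissible slope `a` satisfies `a ≤ √(c a)`, hence `a ≤ c`
  have hmem : sInf S ∈ S := hS.csInf_mem
    ⟨2 * c, by positivity, fun t ht => le_two_mul_mul_of_sq_le_integral hc hu hu0 h ht⟩
    ⟨0, fun a ha => ha.1⟩
  have hle : sInf S ≤ √(c * sInf S) := csInf_le ⟨0, fun a ha => ha.1⟩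
    ⟨Real.sqrt_nonneg _, fun t ht => le_sqrt_mul_mul_of_sq_le_integral hc hmem.1 hu hu0 h hmem.2 ht⟩
  have hc' : sInf S ≤ c := by
    refine le_of_sq_le_mul hmem.1 hc ?_
    nlinarith [(Real.le_sqrt hmem.1 (mul_nonneg hc hmem.1)).mp hle]
  exact (hmem.2 t ht).trans (mul_le_mul_of_nonneg_right hc' ht.1)

end Gronwall

namespace IsArc

variable {T α : ℝ} {x x' : ℝ → H}

lemma integrableOn (hα : 1 ≤ α) (h : IsArc T α x x') : IntegrableOn x' (Icc 0 T) :=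
  h.1.integrable (ENNReal.one_le_ofReal.mpr hα)

lemma intervalIntegrable (hα : 1 ≤ α) (h : IsArc T α x x') {s t : ℝ} (hs : s ∈ Icc 0 T)
    (ht : t ∈ Icc 0 T) : IntervalIntegrable x' volume s t :=
  ((h.integrableOn hα).mono_set (uIcc_subset_Icc hs ht)).intervalIntegrable

lemma sub_eq_integral (hα : 1 ≤ α) (h : IsArc T α x x') {s t : ℝ} (hs : s ∈ Icc 0 T)
    (ht : t ∈ Icc 0 T) : x t - x s = ∫ r in s..t, x' r := by
  rw [h.2 t ht, h.2 s hs, add_sub_add_left_eq_sub, intervalIntegral.integral_interval_sub_left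
    (h.intervalIntegrable hα (left_mem_Icc.mpr (hs.1.trans hs.2)) ht)
    (h.intervalIntegrable hα (left_mem_Icc.mpr (hs.1.trans hs.2)) hs)]

lemma continuousOn [CompleteSpace H] (hα : 1 ≤ α) (h : IsArc T α x x') :
    ContinuousOn x (Icc 0 T) := by
  rcases lt_or_ge T 0 with hT | hT
  · simp [Icc_eq_empty_of_lt hT]
  have hprim := intervalIntegral.continuousOn_primitive_interval' (a := 0)
    (h.intervalIntegrable hα (left_mem_Icc.mpr hT) (right_mem_Icc.mpr hT)) left_mem_uIcc
  rw [uIcc_of_le hT] at hprim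
  exact (continuousOn_const.add hprim).congr h.2

lemma integral_inner_sub_eq [CompleteSpace H] (hα : 1 ≤ α) (h : IsArc T α x x') {t : ℝ}
    (ht : t ∈ Icc 0 T) (v : H) :
    ∫ s in (0:ℝ)..t, ⟪x s - v, x' s⟫ = (‖x t - v‖ ^ 2 - ‖x 0 - v‖ ^ 2) / 2 := by
  refine integral_inner_eq_of_eq_add_integral ht.1
    (h.intervalIntegrable hα (left_mem_Icc.mpr (ht.1.trans ht.2)) ht) fun s hs => ?_
  rw [h.2 s (Icc_subset_Icc_right ht.2 hs)]
  abel

lemma start_eq_and_ae_eq_neg_inner [CompleteSpace H] {L : H × H → EReal} {x₀ : H}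
    (hL : IsAntiselfdual L) (hT : 0 ≤ T) (hα : 1 ≤ α) (h : IsArc T α x x')
    (hzero : eIntegral (volume.restrict (Icc (0:ℝ) T)) (fun t => L (x t, x' t)) +
      (((1/2) * ‖x 0‖^2 - 2 * ⟪x 0, x₀⟫ + ‖x₀‖^2 + (1/2) * ‖x T‖^2 : ℝ) : EReal) = 0) :
    x 0 = x₀ ∧ ∀ᵐ t ∂volume.restrict (Icc 0 T), L (x t, x' t) = ((-⟪x t, x' t⟫ : ℝ) : EReal) := by
  obtain ⟨hint, hfin, hval⟩ := eIntegral_add_coe_eq_zero hzero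
  have hinner : IntegrableOn (fun t => ⟪x t, x' t⟫) (Icc 0 T) :=
    integrableOn_inner_of_continuousOn isCompact_Icc (h.continuousOn hα) (h.integrableOn hα)
  set φ : ℝ → ℝ := fun t => (L (x t, x' t)).toReal + ⟪x t, x' t⟫
  have hφ_nonneg : 0 ≤ᵐ[volume.restrict (Icc 0 T)] φ := by
    filter_upwards [hfin] with t ht
    have := hL.neg_inner_le (x t, x' t)
    rw [ht, EReal.coe_le_coe_iff] at this
    simp only [Pi.zero_apply, φ]
    linarith
  have hφ_int : ∫ t in Icc 0 T, φ t = -‖x 0 - x₀‖ ^ 2 := by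
    have henergy := h.integral_inner_sub_eq hα (right_mem_Icc.mpr hT) 0
    simp only [sub_zero] at henergy
    rw [intervalIntegral.integral_of_le hT, ← integral_Icc_eq_integral_Ioc] at henergy
    rw [integral_add hint hinner, hval, henergy, norm_sub_sq_real]
    ring
  have hstart : ‖x 0 - x₀‖ = 0 := by
    nlinarith [integral_nonneg_of_ae hφ_nonneg, norm_nonneg (x 0 - x₀)]
  have hφ_zero : φ =ᵐ[volume.restrict (Icc 0 T)] 0 := by
    rw [← integral_eq_zero_iff_of_nonneg_ae hφ_nonneg (hint.add hinner), hφ_int, hstart]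
    simp
  refine ⟨sub_eq_zero.mp (norm_eq_zero.mp hstart), ?_⟩
  filter_upwards [hfin, hφ_zero] with t ht hφt
  rw [ht, EReal.coe_eq_coe_iff]
  simp only [Pi.zero_apply, φ] at hφt
  linarith

section Evolution

variable [CompleteSpace H] {G : Set (H × H)} {p : H}

lemma norm_sub_start_le (hα : 1 ≤ α) (h : IsArc T α x x')
    (hp : ∀ z ∈ G, ⟪z.1 - x 0, z.2 - p⟫ ≤ 0) (hxG : ∀ᵐ t, t ∈ Icc 0 T → (x t, x' t) ∈ G)
    {t : ℝ} (ht : t ∈ Icc 0 T) : ‖x t - x 0‖ ≤ ‖p‖ * t := by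
  have hu : ContinuousOn (fun t => ‖x t - x 0‖) (Icc 0 T) :=
    ((h.continuousOn hα).sub continuousOn_const).norm
  refine le_mul_of_sq_le_integral (norm_nonneg p) hu (fun _ _ => norm_nonneg _) (fun t ht => ?_) ht
  have hsub : uIcc 0 t ⊆ Icc 0 T := uIcc_subset_Icc (left_mem_Icc.mpr (ht.1.trans ht.2)) ht
  have hint : IntervalIntegrable (fun s => ⟪x s - x 0, x' s⟫) volume 0 t :=
    (integrableOn_inner_of_continuousOn isCompact_uIcc
      (((h.continuousOn hα).sub continuousOn_const).mono hsub)
      ((h.integrableOn hα).mono_set hsub)).intervalIntegrable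
  -- pointwise, `⟪x - x 0, x'⟫ ≤ ⟪x - x 0, p⟫` by `hp`
  have hle : ∫ s in (0:ℝ)..t, ⟪x s - x 0, x' s⟫ ≤ ∫ s in (0:ℝ)..t, ‖p‖ * ‖x s - x 0‖ := by
    refine intervalIntegral.integral_mono_ae_restrict ht.1 hint
      ((hu.mono hsub).intervalIntegrable.const_mul _) ?_
    filter_upwards [ae_restrict_of_ae hxG, ae_restrict_mem measurableSet_Icc] with s hs hmem
    have hmono := hp _ (hs (Icc_subset_Icc_right ht.2 hmem))
    have hsplit : ⟪x s - x 0, x' s⟫ = ⟪x s - x 0, p⟫ + ⟪x s - x 0, x' s - p⟫ := by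
      rw [← inner_add_right, add_sub_cancel]
    rw [hsplit, mul_comm]
    linarith [real_inner_le_norm (x s - x 0) p]
  rw [h.integral_inner_sub_eq hα ht, sub_self, norm_zero] at hle
  rw [intervalIntegral.integral_const_mul] at hle
  linarith

lemma norm_shift_le (hα : 1 ≤ α) (h : IsArc T α x x')
    (hG : ∀ z ∈ G, ∀ w ∈ G, ⟪z.1 - w.1, z.2 - w.2⟫ ≤ 0)
    (hxG : ∀ᵐ t, t ∈ Icc 0 T → (x t, x' t) ∈ G) {d t : ℝ} (hd : 0 ≤ d) (ht : 0 ≤ t)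
    (htd : t + d ≤ T) : ‖x (t + d) - x t‖ ≤ ‖x d - x 0‖ := by
  have hmem : ∀ {s}, s ∈ Icc 0 t → s ∈ Icc 0 T ∧ s + d ∈ Icc 0 T := fun hs =>
    ⟨⟨hs.1, by linarith [hs.2]⟩, ⟨by linarith [hs.1], by linarith [hs.2]⟩⟩
  have hshift : IntervalIntegrable (fun s => x' (s + d)) volume 0 t := by
    simpa using (h.intervalIntegrable hα (hmem (left_mem_Icc.mpr ht)).2
      (hmem (right_mem_Icc.mpr ht)).2).comp_add_right d
  have hg : IntervalIntegrable (fun s => x' (s + d) - x' s) volume 0 t :=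
    hshift.sub (h.intervalIntegrable hα (hmem (left_mem_Icc.mpr ht)).1
      (hmem (right_mem_Icc.mpr ht)).1)
  have hF : ∀ s ∈ Icc 0 t, x (s + d) - x s =
      (x (0 + d) - x 0) + ∫ r in (0:ℝ)..s, (x' (r + d) - x' r) := by
    intro s hs
    rw [intervalIntegral.integral_sub (hshift.mono_set (uIcc_subset_uIcc_left (by
        rw [uIcc_of_le ht]; exact hs))) (h.intervalIntegrable hα (hmem (left_mem_Icc.mpr ht)).1
        (hmem hs).1), intervalIntegral.integral_comp_add_right, zero_add,
      ← h.sub_eq_integral hα (s := d) ⟨hd, by linarith⟩ (hmem hs).2,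
      ← h.sub_eq_integral hα (hmem (left_mem_Icc.mpr ht)).1 (hmem hs).1]
    abel
  have hnonpos : ∫ s in (0:ℝ)..t, ⟪x (s + d) - x s, x' (s + d) - x' s⟫ ≤ 0 := by
    have hxG' := (measurePreserving_add_right volume d).quasiMeasurePreserving.ae hxG
    have hneg := intervalIntegral.integral_nonneg_of_ae_restrict (μ := volume) ht
      (f := fun s => -⟪x (s + d) - x s, x' (s + d) - x' s⟫) (by
        filter_upwards [ae_restrict_of_ae hxG, ae_restrict_of_ae hxG',
          ae_restrict_mem measurableSet_Icc] with s hs hsd hmem'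
        simpa using hG _ (hsd (hmem hmem').2) _ (hs (hmem hmem').1))
    rw [intervalIntegral.integral_neg] at hneg
    linarith
  rw [integral_inner_eq_of_eq_add_integral ht hg hF, zero_add] at hnonpos
  exact (pow_le_pow_iff_left₀ (norm_nonneg _) (norm_nonneg _) two_ne_zero).mp (by linarith)

lemma lipschitzOnWith (hα : 1 ≤ α) (h : IsArc T α x x')
    (hG : ∀ z ∈ G, ∀ w ∈ G, ⟪z.1 - w.1, z.2 - w.2⟫ ≤ 0)
    (hp : ∀ z ∈ G, ⟪z.1 - x 0, z.2 - p⟫ ≤ 0) (hxG : ∀ᵐ t, t ∈ Icc 0 T → (x t, x' t) ∈ G) :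
    LipschitzOnWith ‖p‖₊ x (Icc 0 T) := by
  refine LipschitzOnWith.of_dist_le_mul fun t ht s hs => ?_
  wlog hst : s ≤ t generalizing s t
  · rw [dist_comm, dist_comm t]
    exact this s hs t ht (le_of_not_ge hst)
  have hshift := h.norm_shift_le hα hG hxG (sub_nonneg.mpr hst) hs.1 (by linarith [ht.2])
  rw [add_sub_cancel] at hshift
  have hstart := h.norm_sub_start_le hα hp hxG ⟨sub_nonneg.mpr hst, by linarith [hs.1, ht.2]⟩
  rw [dist_eq_norm, Real.dist_eq, abs_of_nonneg (sub_nonneg.mpr hst), coe_nnnorm]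
  exact hshift.trans hstart

end Evolution

lemma ae_hasDerivAt [CompleteSpace H] (hα : 1 ≤ α) (h : IsArc T α x x') (hT : 0 ≤ T) :
    ∀ᵐ t, t ∈ Ioo 0 T → HasDerivAt x (x' t) t := by
  have hint := h.intervalIntegrable hα (left_mem_Icc.mpr hT) (right_mem_Icc.mpr hT)
  filter_upwards [hint.ae_hasDerivAt_integral] with t ht hmem
  rw [uIcc_of_le hT] at ht
  refine ((ht (Ioo_subset_Icc_self hmem) 0 (left_mem_Icc.mpr hT)).const_add
    (x 0)).congr_of_eventuallyEq ?_
  filter_upwards [Ioo_mem_nhds hmem.1 hmem.2] with s hs using h.2 s (Ioo_subset_Icc_self hs)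

lemma ae_norm_le_of_lipschitzOnWith [CompleteSpace H] {K : NNReal} (hα : 1 ≤ α)
    (h : IsArc T α x x') (hT : 0 ≤ T) (hx : LipschitzOnWith K x (Icc 0 T)) :
    ∀ᵐ t ∂volume.restrict (Icc 0 T), ‖x' t‖ ≤ K := by
  have hne : ∀ a : ℝ, ∀ᵐ t : ℝ, t ≠ a := fun a => by simp [ae_iff, measure_singleton]
  rw [ae_restrict_iff' measurableSet_Icc]
  filter_upwards [h.ae_hasDerivAt hα hT, hne 0, hne T] with t ht h0 hT' hmem
  have hmem' : t ∈ Ioo 0 T := ⟨lt_of_le_of_ne hmem.1 (Ne.symm h0), lt_of_le_of_ne hmem.2 hT'⟩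
  exact (ht hmem').le_of_lipschitzOn (Icc_mem_nhds hmem'.1 hmem'.2) hx

end IsArc

theorem statement17_general [CompleteSpace H] (T : ℝ) (hT : 0 < T) (L : H × H → EReal)
    (hLasd : ∀ x p : H, eConj2 L (p, x) = L (-x, -p))
    (x₀ p₀ : H) (hx₀ : ESubdiff2 L (x₀, p₀) (-p₀, -x₀))
    (xh xh' : ℝ → H) (harc : IsArc T 2 xh xh')
    (hzero : eIntegral (volume.restrict (Icc (0:ℝ) T)) (fun t => L (xh t, xh' t)) +
      (((1/2) * ‖xh 0‖^2 - 2 * ⟪xh 0, x₀⟫ + ‖x₀‖^2 + (1/2) * ‖xh T‖^2 : ℝ) : EReal) = 0) :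
    ∫ t in Icc (0:ℝ) T, ‖xh' t‖^2 ≤ T * ‖p₀‖^2 := by
  have hL : IsAntiselfdual L := hLasd
  have hα : (1:ℝ) ≤ 2 := one_le_two
  obtain ⟨hstart, hgraph⟩ := harc.start_eq_and_ae_eq_neg_inner hL hT.le hα hzero
  set G : Set (H × H) := {z | L z = ((-⟪z.1, z.2⟫ : ℝ) : EReal)}
  have hG : ∀ z ∈ G, ∀ w ∈ G, ⟪z.1 - w.1, z.2 - w.2⟫ ≤ 0 := fun z hz w hw =>
    hL.inner_sub_nonpos hz hw
  have hp : ∀ z ∈ G, ⟪z.1 - xh 0, z.2 - p₀⟫ ≤ 0 := fun z hz =>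
    hstart ▸ hL.inner_sub_nonpos_of_eSubdiff2 hx₀ hz
  have hxG : ∀ᵐ t, t ∈ Icc 0 T → (xh t, xh' t) ∈ G :=
    (ae_restrict_iff' measurableSet_Icc).mp hgraph
  have hbound := harc.ae_norm_le_of_lipschitzOnWith hα hT.le (harc.lipschitzOnWith hα hG hp hxG)
  calc ∫ t in Icc (0:ℝ) T, ‖xh' t‖^2 ≤ ∫ _ in Icc (0:ℝ) T, ‖p₀‖^2 :=
        integral_mono_of_nonneg (.of_forall fun _ => by positivity) (integrable_const _)
          (hbound.mono fun t ht => pow_le_pow_left₀ (norm_nonneg _) ht 2)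
    _ = T * ‖p₀‖^2 := by simp [hT.le]

/-- Lemma 3.6: a zero of the lifted action functional satisfies the
a priori bound `∫₀ᵀ ‖x̂'(t)‖² dt ≤ T ‖p₀‖²`. -/
theorem statement17 [CompleteSpace H] (T : ℝ) (hT : 0 < T) (L : H × H → EReal)
    (hLp : EProper L) (hLc : EConvexOn L) (hLl : LowerSemicontinuous L)
    (hLasd : ∀ x p : H, eConj2 L (p, x) = L (-x, -p))
    (hunif : ∃ ε : ℝ, 0 < ε ∧ ∀ p : H, EConvexOn
      (fun x : H => L (x, p) - (((ε/2) * ‖x‖^2 : ℝ) : EReal)))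
    (x₀ p₀ : H) (hx₀ : ESubdiff2 L (x₀, p₀) (-p₀, -x₀))
    (xh xh' : ℝ → H) (harc : IsArc T 2 xh xh')
    (hzero : eIntegral (volume.restrict (Icc (0:ℝ) T)) (fun t => L (xh t, xh' t)) +
      (((1/2) * ‖xh 0‖^2 - 2 * ⟪xh 0, x₀⟫ + ‖x₀‖^2 + (1/2) * ‖xh T‖^2 : ℝ) : EReal) = 0) :
    ∫ t in Icc (0:ℝ) T, ‖xh' t‖^2 ≤ T * ‖p₀‖^2 :=
  statement17_general T hT L hLasd x₀ p₀ hx₀ xh xh' harc hzero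
end
end
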